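/- Let q ≥ 5 be an odd prime power. The incidence structure (P_1, C_1), where P_1 = {(1,x,y): x,y ∈ F_q*} and C_1 is the set of conics through e_1,e_2,e_3 (restricted to their points in P_1), is a generalized partial geometry PG(q-3, q-3; q-5, q-4, q-3): every block has q-2 points, every point lies on q-2 blocks, two points lie on at most one common block, and for every non-incident point-block pair the number of points of the block joined to the point is q-5, q-4, or q-3, with all three values attained. -/

import Mathlib

open Matrix

/-- Two points are joined if they are distinct and lie on a common block. -/
abbrev joinedIn {V : Type} [DecidableEq V] (Bl : Finset (Finset V)) (P Q : V) : Prop :=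
  P ≠ Q ∧ ∃ b ∈ Bl, P ∈ b ∧ Q ∈ b

/-- (𝒫, ℬ) is a generalized partial geometry PG(s,t;α₁,…,α_r) with {α₁,…,α_r} = αs:
two distinct points on at most one common block, each block has s+1 points, each point
on t+1 blocks, every anti-flag count lies in αs, and each value in αs is attained. -/
def IsGPG {V : Type} [Fintype V] [DecidableEq V] (Bl : Finset (Finset V))
    (s t : ℕ) (αs : Finset ℕ) : Prop :=
  (∀ P Q : V, P ≠ Q → (Bl.filter fun b => P ∈ b ∧ Q ∈ b).card ≤ 1) ∧
  (∀ b ∈ Bl, b.card = s + 1) ∧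
  (∀ P : V, (Bl.filter fun b => P ∈ b).card = t + 1) ∧
  (∀ (P : V), ∀ b ∈ Bl, P ∉ b → (b.filter fun Q => joinedIn Bl P Q).card ∈ αs) ∧
  (∀ α ∈ αs, ∃ (P : V), ∃ b ∈ Bl, P ∉ b ∧ (b.filter fun Q => joinedIn Bl P Q).card = α)

/-- (1,x,y) lies on the conic through e₁,e₂,e₃ with matrix !![0,a,b;a,0,1;b,1,0]. -/
abbrev onConic (F : Type) [Field F] (a b : F) (P : F × F) : Prop :=
  ![1, P.1, P.2] ⬝ᵥ (!![0, a, b; a, 0, 1; b, 1, 0] *ᵥ ![1, P.1, P.2]) = 0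

/-! Halving the quadratic form, the conic `(a, b)` meets `𝒫₁` in the points with
`a x + b y + x y = 0`, i.e. `y = -a x / (x + b)` for `x ∉ {0, -b}`: a block has `q - 2` points, and
dually the conics through `(x, y)` are parametrised by `b ∉ {0, -x}`. Two points `(x, y)`, `(u, v)`
are joined iff `x ≠ u`, `y ≠ v` and `x v ≠ y u` (Cramer's rule then produces the conic). For an
anti-flag `(P, B)` with `P = (x, y)`, a point of `B` fails one of these three conditions iff its
first coordinate is `x`, `-b y / (y + a)` or `-(a x + b y) / y`. These are distinct since `P ∉ B`,
they lie on `B` iff `x ≠ -b`, `y ≠ -a`, `a x + b y ≠ 0` respectively, and at least one does, as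
otherwise `2 a b = 0`. -/

lemma two_ne_zero_of_odd_card {F : Type} [Field F] [Fintype F] (hodd : Odd (Fintype.card F)) :
    (2 : F) ≠ 0 :=
  Ring.two_ne_zero fun h => by
    have := FiniteField.even_card_iff_char_two.mp h
    rw [Nat.odd_iff] at hodd
    omega

lemma onConic_iff {F : Type} [Field F] [NeZero (2 : F)] (a b : F) (p : F × F) :
    onConic F a b p ↔ a * p.1 + b * p.2 + p.1 * p.2 = 0 := by
  have h : ![1, p.1, p.2] ⬝ᵥ (!![0, a, b; a, 0, 1; b, 1, 0] *ᵥ ![1, p.1, p.2]) =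
      2 * (a * p.1 + b * p.2 + p.1 * p.2) := by
    simp [dotProduct, mulVec, Fin.sum_univ_three]
    ring
  rw [onConic, h, mul_eq_zero, or_iff_right two_ne_zero]

abbrev TorusPt (F : Type) [Field F] := {p : F × F // p.1 ≠ 0 ∧ p.2 ≠ 0}

section Conics

variable {F : Type} [Field F] [Fintype F] [DecidableEq F]

def conicBlock (a b : F) : Finset (TorusPt F) :=
  Finset.univ.filter fun P => onConic F a b P.1

variable (F) in
def conicBlocks : Finset (Finset (TorusPt F)) :=
  (Finset.univ.filter fun ab : F × F => ab.1 ≠ 0 ∧ ab.2 ≠ 0).image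
    fun ab => conicBlock ab.1 ab.2

lemma mem_conicBlocks {B : Finset (TorusPt F)} :
    B ∈ conicBlocks F ↔ ∃ a b : F, a ≠ 0 ∧ b ≠ 0 ∧ conicBlock a b = B := by
  simp [conicBlocks, and_assoc]

variable [NeZero (2 : F)] {a b a' b' : F} {P Q : TorusPt F}

lemma mem_conicBlock : P ∈ conicBlock a b ↔ a * P.1.1 + b * P.1.2 + P.1.1 * P.1.2 = 0 := by
  simp [conicBlock, onConic_iff]

lemma fst_add_ne_zero_of_mem (ha : a ≠ 0) (hP : P ∈ conicBlock a b) : P.1.1 + b ≠ 0 := by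
  rw [mem_conicBlock] at hP
  intro h
  exact mul_ne_zero ha P.2.1 (by linear_combination hP - P.1.2 * h)

lemma snd_add_ne_zero_of_mem (hb : b ≠ 0) (hP : P ∈ conicBlock a b) : P.1.2 + a ≠ 0 := by
  rw [mem_conicBlock] at hP
  intro h
  exact mul_ne_zero hb P.2.2 (by linear_combination hP - P.1.1 * h)

lemma snd_eq_of_mem (ha : a ≠ 0) (hP : P ∈ conicBlock a b) :
    P.1.2 = -(a * P.1.1) / (P.1.1 + b) := by
  rw [eq_div_iff (fst_add_ne_zero_of_mem ha hP)]
  linear_combination (mem_conicBlock.mp hP)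

lemma fst_eq_of_mem (hb : b ≠ 0) (hP : P ∈ conicBlock a b) :
    P.1.1 = -(b * P.1.2) / (P.1.2 + a) := by
  rw [eq_div_iff (snd_add_ne_zero_of_mem hb hP)]
  linear_combination (mem_conicBlock.mp hP)

lemma injOn_fst_conicBlock (ha : a ≠ 0) : Set.InjOn (fun Q : TorusPt F => Q.1.1) (conicBlock a b) :=
  fun P hP Q hQ (h : P.1.1 = Q.1.1) =>
    Subtype.ext <| Prod.ext h <| by rw [snd_eq_of_mem ha hP, snd_eq_of_mem ha hQ, h]

lemma chord_of_mem (ha : a ≠ 0) (hb : b ≠ 0) (hP : P ∈ conicBlock a b)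
    (hQ : Q ∈ conicBlock a b) (hPQ : P ≠ Q) :
    P.1.1 ≠ Q.1.1 ∧ P.1.2 ≠ Q.1.2 ∧ P.1.1 * Q.1.2 ≠ P.1.2 * Q.1.1 := by
  have hx : P.1.1 ≠ Q.1.1 := fun h => hPQ (injOn_fst_conicBlock ha hP hQ h)
  refine ⟨hx, fun h => hPQ <| Subtype.ext <| Prod.ext ?_ h, fun h => hx ?_⟩
  · rw [fst_eq_of_mem hb hP, fst_eq_of_mem hb hQ, h]
  · rw [mem_conicBlock] at hP hQ
    have : Q.1.1 * P.1.2 * (Q.1.1 - P.1.1) = 0 := by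
      linear_combination P.1.1 * hQ - Q.1.1 * hP - (b + Q.1.1) * h
    simpa [Q.2.1, P.2.2, sub_eq_zero, eq_comm] using this

lemma eq_of_mem_conicBlock (ha : a ≠ 0) (hb : b ≠ 0) (hPQ : P ≠ Q)
    (hP : P ∈ conicBlock a b) (hQ : Q ∈ conicBlock a b)
    (hP' : P ∈ conicBlock a' b') (hQ' : Q ∈ conicBlock a' b') : a = a' ∧ b = b' := by
  have hdet := sub_ne_zero.mpr (chord_of_mem ha hb hP hQ hPQ).2.2
  rw [mem_conicBlock] at hP hQ hP' hQ'
  obtain rfl : a = a' := by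
    have : (a - a') * (P.1.1 * Q.1.2 - P.1.2 * Q.1.1) = 0 := by
      linear_combination Q.1.2 * (hP - hP') - P.1.2 * (hQ - hQ')
    simpa [hdet, sub_eq_zero] using this
  have : (b - b') * P.1.2 = 0 := by linear_combination hP - hP'
  simpa [P.2.2, sub_eq_zero] using this

lemma card_filter_mem_mem_le_one (hPQ : P ≠ Q) :
    ((conicBlocks F).filter fun B => P ∈ B ∧ Q ∈ B).card ≤ 1 := by
  rw [Finset.card_le_one]
  simp only [Finset.mem_filter, mem_conicBlocks]
  rintro _ ⟨⟨a, b, ha, hb, rfl⟩, hP, hQ⟩ _ ⟨⟨a', b', -, -, rfl⟩, hP', hQ'⟩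
  obtain ⟨rfl, rfl⟩ := eq_of_mem_conicBlock ha hb hPQ hP hQ hP' hQ'
  rfl

lemma exists_conicBlock (hx : P.1.1 ≠ Q.1.1) (hy : P.1.2 ≠ Q.1.2)
    (hxy : P.1.1 * Q.1.2 ≠ P.1.2 * Q.1.1) :
    ∃ a b, a ≠ 0 ∧ b ≠ 0 ∧ P ∈ conicBlock a b ∧ Q ∈ conicBlock a b := by
  obtain ⟨⟨x, y⟩, hx0, hy0⟩ := P
  obtain ⟨⟨u, v⟩, hu0, hv0⟩ := Q
  dsimp only at *
  have hd : x * v - y * u ≠ 0 := sub_ne_zero.mpr hxy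
  refine ⟨y * v * (u - x) / (x * v - y * u), x * u * (y - v) / (x * v - y * u),
    div_ne_zero ?_ hd, div_ne_zero ?_ hd, ?_, ?_⟩
  · simp [*, sub_eq_zero, Ne.symm hx]
  · simp [*, sub_eq_zero]
  all_goals
    rw [mem_conicBlock, div_mul_eq_mul_div, div_mul_eq_mul_div, ← add_div,
      div_add' _ _ _ hd, div_eq_zero_iff]
    exact Or.inl (by ring)

lemma joinedIn_conicBlocks_iff : joinedIn (conicBlocks F) P Q ↔
    P.1.1 ≠ Q.1.1 ∧ P.1.2 ≠ Q.1.2 ∧ P.1.1 * Q.1.2 ≠ P.1.2 * Q.1.1 := by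
  constructor
  · rintro ⟨hPQ, B, hB, hP, hQ⟩
    obtain ⟨a, b, ha, hb, rfl⟩ := mem_conicBlocks.mp hB
    exact chord_of_mem ha hb hP hQ hPQ
  · rintro ⟨hx, hy, hxy⟩
    obtain ⟨a, b, ha, hb, hP, hQ⟩ := exists_conicBlock hx hy hxy
    exact ⟨fun h => hx (h ▸ rfl), conicBlock a b, mem_conicBlocks.mpr ⟨a, b, ha, hb, rfl⟩,
      hP, hQ⟩

end Conics

lemma exists_notMem_of_card_lt {α : Type*} [Fintype α] (s : Finset α)
    (hs : s.card < Fintype.card α) : ∃ c, c ∉ s := by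
  obtain ⟨c, -, hc⟩ := Finset.exists_mem_notMem_of_card_lt_card (s := s) (t := Finset.univ)
    (by rwa [Finset.card_univ])
  exact ⟨c, hc⟩

lemma card_filter_mul_eq {F : Type} [Field F] [DecidableEq F] (s : Finset F) {α β : F}
    (hα : α ≠ 0) : (s.filter fun u => α * u = β).card = if β / α ∈ s then 1 else 0 := by
  rw [Finset.filter_congr (q := (· = β / α)) fun u _ => by rw [eq_div_iff hα, mul_comm],
    Finset.filter_eq']
  split_ifs <;> simp

section Counting

variable {F : Type} [Field F] [Fintype F] [DecidableEq F]

lemma card_compl_zero_neg {b : F} (hb : b ≠ 0) :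
    ({0, -b}ᶜ : Finset F).card = Fintype.card F - 2 := by
  rw [Finset.card_compl, Finset.card_pair (neg_ne_zero.mpr hb).symm]

variable [NeZero (2 : F)] {a b : F} {P : TorusPt F}

lemma image_fst_conicBlock (ha : a ≠ 0) :
    (conicBlock a b).image (fun Q => Q.1.1) = {0, -b}ᶜ := by
  ext u
  simp only [Finset.mem_image, Finset.mem_compl, Finset.mem_insert, Finset.mem_singleton, not_or]
  constructor
  · rintro ⟨Q, hQ, rfl⟩
    exact ⟨Q.2.1, fun h => fst_add_ne_zero_of_mem ha hQ (by rw [h, neg_add_cancel])⟩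
  · rintro ⟨hu, hub⟩
    have hub' : u + b ≠ 0 := fun h => hub (eq_neg_of_add_eq_zero_left h)
    refine ⟨⟨(u, -(a * u) / (u + b)), hu,
      div_ne_zero (neg_ne_zero.mpr (mul_ne_zero ha hu)) hub'⟩, ?_, rfl⟩
    rw [mem_conicBlock]
    dsimp only
    field_simp
    ring

lemma card_conicBlock (ha : a ≠ 0) (hb : b ≠ 0) :
    (conicBlock a b).card = Fintype.card F - 2 := by
  rw [← card_compl_zero_neg hb, ← image_fst_conicBlock ha,
    Finset.card_image_of_injOn (injOn_fst_conicBlock ha)]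

lemma card_filter_conicBlock (ha : a ≠ 0) {p : TorusPt F → Prop} [DecidablePred p]
    {p' : F → Prop} [DecidablePred p'] (h : ∀ Q ∈ conicBlock a b, p Q ↔ p' Q.1.1) :
    ((conicBlock a b).filter p).card = (({0, -b}ᶜ : Finset F).filter p').card := by
  rw [← image_fst_conicBlock ha, Finset.filter_image, Finset.filter_congr h,
    Finset.card_image_of_injOn ((injOn_fst_conicBlock ha).mono (Finset.filter_subset _ _))]

lemma injOn_conicBlock (hq : 4 ≤ Fintype.card F) :
    Set.InjOn (fun ab : F × F => conicBlock ab.1 ab.2) {ab | ab.1 ≠ 0 ∧ ab.2 ≠ 0} := by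
  rintro ⟨a, b⟩ ⟨ha, hb⟩ ⟨a', b'⟩ - h
  dsimp only at ha hb h
  obtain ⟨P, hP, Q, hQ, hPQ⟩ := Finset.one_lt_card.mp <| show 1 < (conicBlock a b).card by
    rw [card_conicBlock ha hb]
    omega
  obtain ⟨rfl, rfl⟩ := eq_of_mem_conicBlock ha hb hPQ hP hQ (h ▸ hP) (h ▸ hQ)
  rfl

lemma card_filter_mem_conicBlocks (hq : 4 ≤ Fintype.card F) (P : TorusPt F) :
    ((conicBlocks F).filter (P ∈ ·)).card = Fintype.card F - 2 := by
  rw [conicBlocks, Finset.filter_image,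
    Finset.card_image_of_injOn ((injOn_conicBlock hq).mono fun ab hab => by
      simpa using (Finset.mem_filter.mp hab).1),
    ← card_compl_zero_neg P.2.1]
  refine Finset.card_nbij' Prod.snd (fun b => (-(P.1.2 * (b + P.1.1)) / P.1.1, b))
    ?_ ?_ ?_ (fun _ _ => rfl)
  · rintro ⟨a, b⟩ hab
    simp only [Finset.mem_coe, Finset.mem_filter, Finset.mem_univ, true_and] at hab
    obtain ⟨⟨ha, hb⟩, hP⟩ := hab
    have := fst_add_ne_zero_of_mem ha hP
    simp only [Finset.mem_coe, Finset.mem_compl, Finset.mem_insert, Finset.mem_singleton,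
      not_or]
    exact ⟨hb, fun h => this (by rw [h, add_neg_cancel])⟩
  · intro b hb
    simp only [Finset.mem_coe, Finset.mem_compl, Finset.mem_insert, Finset.mem_singleton,
      not_or] at hb
    have hbx : b + P.1.1 ≠ 0 := fun h => hb.2 (eq_neg_of_add_eq_zero_left h)
    simp only [Finset.mem_coe, Finset.mem_filter, Finset.mem_univ, true_and, mem_conicBlock]
    refine ⟨⟨div_ne_zero (neg_ne_zero.mpr (mul_ne_zero P.2.2 hbx)) P.2.1, hb.1⟩, ?_⟩
    have := P.2.1
    field_simp
    ring
  · rintro ⟨a, b⟩ hab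
    simp only [Finset.mem_coe, Finset.mem_filter, Finset.mem_univ, true_and,
      mem_conicBlock] at hab
    have := P.2.1
    ext
    · dsimp only
      field_simp
      linear_combination -hab.2
    · rfl

lemma not_joinedIn_iff_of_mem (ha : a ≠ 0) {Q : TorusPt F} (hQ : Q ∈ conicBlock a b) :
    ¬ joinedIn (conicBlocks F) P Q ↔ Q.1.1 = P.1.1 ∨ (P.1.2 + a) * Q.1.1 = -(b * P.1.2) ∨
      P.1.2 * Q.1.1 = -(a * P.1.1 + b * P.1.2) := by
  have hE := mem_conicBlock.mp hQ
  have hQb := fst_add_ne_zero_of_mem ha hQ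
  rw [joinedIn_conicBlocks_iff, not_and_or, not_and_or, not_not, not_not, not_not, eq_comm]
  refine or_congr_right (or_congr ⟨fun h => ?_, fun h => ?_⟩ ⟨fun h => ?_, fun h => ?_⟩)
  · rw [h]
    linear_combination hE
  · exact mul_left_cancel₀ hQb (by linear_combination h - hE)
  · exact mul_left_cancel₀ Q.2.1 (by linear_combination P.1.1 * hE - (Q.1.1 + b) * h)
  · exact mul_left_cancel₀ hQb (by linear_combination P.1.1 * hE - Q.1.1 * h)

lemma card_filter_not_joinedIn_eq_add (ha : a ≠ 0) {x y : F} (hx : x ≠ 0) (hy : y ≠ 0)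
    (hP : a * x + b * y + x * y ≠ 0) :
    ((conicBlock a b).filter fun Q => ¬ joinedIn (conicBlocks F) ⟨(x, y), hx, hy⟩ Q).card =
      (({0, -b}ᶜ : Finset F).filter (· = x)).card +
        (({0, -b}ᶜ : Finset F).filter fun u => (y + a) * u = -(b * y)).card +
        (({0, -b}ᶜ : Finset F).filter fun u => y * u = -(a * x + b * y)).card := by
  rw [card_filter_conicBlock ha (p' := fun u => u = x ∨ (y + a) * u = -(b * y) ∨
      y * u = -(a * x + b * y)) fun Q hQ => not_joinedIn_iff_of_mem ha hQ, Finset.filter_or,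
    Finset.card_union_of_disjoint, Finset.filter_or, Finset.card_union_of_disjoint, ← add_assoc]
  · refine Finset.disjoint_filter.2 fun u _ hB hC => hP ?_
    obtain rfl : u = x := mul_left_cancel₀ ha (by linear_combination hB - hC)
    linear_combination hB
  · refine Finset.disjoint_filter.2 fun u _ hA hBC => hP ?_
    subst hA
    rcases hBC with h | h <;> linear_combination h

lemma card_filter_not_joinedIn (ha : a ≠ 0) (hb : b ≠ 0) (hP : P ∉ conicBlock a b) :
    ((conicBlock a b).filter fun Q => ¬ joinedIn (conicBlocks F) P Q).card =
      (if P.1.1 = -b then 0 else 1) + (if P.1.2 = -a then 0 else 1) +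
        (if a * P.1.1 + b * P.1.2 = 0 then 0 else 1) := by
  obtain ⟨⟨x, y⟩, hx, hy⟩ := P
  rw [mem_conicBlock] at hP
  change x ≠ 0 at hx
  change y ≠ 0 at hy
  rw [card_filter_not_joinedIn_eq_add ha hx hy hP]
  have hA : (({0, -b}ᶜ : Finset F).filter (· = x)).card = if x = -b then 0 else 1 := by
    rw [Finset.filter_eq']
    split_ifs <;> simp_all
  have hB : (({0, -b}ᶜ : Finset F).filter fun u => (y + a) * u = -(b * y)).card =
      if y = -a then 0 else 1 := by
    by_cases hya : y = -a
    · rw [if_pos hya, Finset.card_eq_zero, Finset.filter_eq_empty_iff]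
      intro u _ h
      rw [show y + a = 0 by rw [hya, neg_add_cancel], zero_mul, eq_comm, neg_eq_zero] at h
      exact mul_ne_zero hb hy h
    · have hya' : y + a ≠ 0 := fun h => hya (eq_neg_of_add_eq_zero_left h)
      rw [card_filter_mul_eq _ hya', if_neg hya, if_pos]
      simp only [Finset.mem_compl, Finset.mem_insert, Finset.mem_singleton, not_or]
      refine ⟨div_ne_zero (neg_ne_zero.mpr (mul_ne_zero hb hy)) hya', fun h => ?_⟩
      rw [div_eq_iff hya'] at h
      exact mul_ne_zero hb ha (by linear_combination h)
  have hC : (({0, -b}ᶜ : Finset F).filter fun u => y * u = -(a * x + b * y)).card =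
      if a * x + b * y = 0 then 0 else 1 := by
    have hmem : -(a * x + b * y) / y ∈ ({0, -b}ᶜ : Finset F) ↔ ¬ a * x + b * y = 0 := by
      simp only [Finset.mem_compl, Finset.mem_insert, Finset.mem_singleton, not_or,
        div_eq_iff hy, zero_mul, neg_eq_zero]
      exact and_iff_left fun h => mul_ne_zero ha hx (by linear_combination -h)
    rw [card_filter_mul_eq _ hy]
    simp only [hmem, ite_not]
  rw [hA, hB, hC]

lemma card_filter_joinedIn (ha : a ≠ 0) (hb : b ≠ 0) (hP : P ∉ conicBlock a b) :
    ((conicBlock a b).filter fun Q => joinedIn (conicBlocks F) P Q).card =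
      Fintype.card F - 2 - ((if P.1.1 = -b then 0 else 1) + (if P.1.2 = -a then 0 else 1) +
        (if a * P.1.1 + b * P.1.2 = 0 then 0 else 1)) := by
  have := Finset.card_filter_add_card_filter_not (s := conicBlock a b)
    (fun Q => joinedIn (conicBlocks F) P Q)
  rw [card_conicBlock ha hb, card_filter_not_joinedIn ha hb hP] at this
  omega

lemma card_filter_joinedIn_mem (ha : a ≠ 0) (hb : b ≠ 0) (hP : P ∉ conicBlock a b) :
    ((conicBlock a b).filter fun Q => joinedIn (conicBlocks F) P Q).card ∈
      ({Fintype.card F - 5, Fintype.card F - 4, Fintype.card F - 3} : Finset ℕ) := by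
  have hsome : ¬ (P.1.1 = -b ∧ P.1.2 = -a ∧ a * P.1.1 + b * P.1.2 = 0) := by
    rintro ⟨hx, hy, h⟩
    rw [hx, hy] at h
    exact mul_ne_zero (mul_ne_zero ha hb) two_ne_zero (by linear_combination -h)
  rw [card_filter_joinedIn ha hb hP]
  simp only [Finset.mem_insert, Finset.mem_singleton]
  split_ifs <;> first | omega | exact absurd ⟨‹_›, ‹_›, ‹_›⟩ hsome

lemma exists_antiflag_at_one_one (ha : a ≠ 0) (hb : b ≠ 0) (hab : a + b + 1 ≠ 0) :
    ∃ P : TorusPt F, ∃ B ∈ conicBlocks F, P ∉ B ∧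
      (B.filter fun Q => joinedIn (conicBlocks F) P Q).card =
        Fintype.card F - 2 - ((if (1 : F) = -b then 0 else 1) + (if (1 : F) = -a then 0 else 1) +
          (if a + b = 0 then 0 else 1)) := by
  let P₀ : TorusPt F := ⟨(1, 1), one_ne_zero, one_ne_zero⟩
  have hP : P₀ ∉ conicBlock a b := by simpa [mem_conicBlock, P₀] using hab
  refine ⟨P₀, _, mem_conicBlocks.mpr ⟨a, b, ha, hb, rfl⟩, hP, ?_⟩
  rw [card_filter_joinedIn ha hb hP]
  simp [P₀]

lemma exists_antiflag_card_eq (hq : 5 ≤ Fintype.card F) :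
    ∀ α ∈ ({Fintype.card F - 5, Fintype.card F - 4, Fintype.card F - 3} : Finset ℕ),
      ∃ P : TorusPt F, ∃ B ∈ conicBlocks F, P ∉ B ∧
        (B.filter fun Q => joinedIn (conicBlocks F) P Q).card = α := by
  have h2 : (2 : F) ≠ 0 := two_ne_zero
  have hm1 : (-1 : F) ≠ 0 := neg_ne_zero.mpr one_ne_zero
  simp only [Finset.mem_insert, Finset.mem_singleton]
  rintro α (rfl | rfl | rfl)
  · obtain ⟨d, hd⟩ := exists_notMem_of_card_lt ({0, -1, -2} : Finset F)
      (Finset.card_le_three.trans_lt (by omega))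
    simp only [Finset.mem_insert, Finset.mem_singleton, not_or] at hd
    obtain ⟨hd0, hd1, hd2⟩ := hd
    obtain ⟨P, B, hB, hP, hcard⟩ := exists_antiflag_at_one_one one_ne_zero hd0
      fun h => hd2 (by linear_combination h)
    refine ⟨P, B, hB, hP, ?_⟩
    rw [hcard, if_neg fun h => hd1 (by linear_combination h),
      if_neg fun h => h2 (by linear_combination h),
      if_neg fun h => hd1 (by linear_combination h)]
    omega
  · obtain ⟨c, hc⟩ := exists_notMem_of_card_lt ({0, 1, -1} : Finset F)
      (Finset.card_le_three.trans_lt (by omega))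
    simp only [Finset.mem_insert, Finset.mem_singleton, not_or] at hc
    obtain ⟨hc0, hc1, hc2⟩ := hc
    obtain ⟨P, B, hB, hP, hcard⟩ := exists_antiflag_at_one_one hc0 hm1 (by simpa using hc0)
    refine ⟨P, B, hB, hP, ?_⟩
    rw [hcard, if_pos (neg_neg 1).symm, if_neg fun h => hc2 (by linear_combination h),
      if_neg fun h => hc1 (by linear_combination h)]
    omega
  · obtain ⟨P, B, hB, hP, hcard⟩ := exists_antiflag_at_one_one hm1 hm1
      fun h => one_ne_zero (by linear_combination -h)
    refine ⟨P, B, hB, hP, ?_⟩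
    rw [hcard, if_pos (neg_neg 1).symm, if_neg fun h => h2 (by linear_combination -h)]
    omega

end Counting

/-- (𝒫₁, 𝒞₁) is a generalized partial geometry PG(q-3, q-3; q-5, q-4, q-3). -/
theorem stmt_4 (F : Type) [Field F] [Fintype F] [DecidableEq F] (q : ℕ)
    (hq : Fintype.card F = q) (hodd : Odd q) (hq5 : 5 ≤ q) :
    IsGPG (V := {p : F × F // p.1 ≠ 0 ∧ p.2 ≠ 0})
      ((Finset.univ.filter (fun ab : F × F => ab.1 ≠ 0 ∧ ab.2 ≠ 0)).image
        (fun ab => Finset.univ.filter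
          (fun P : {p : F × F // p.1 ≠ 0 ∧ p.2 ≠ 0} => onConic F ab.1 ab.2 P.1)))
      (q - 3) (q - 3) {q - 5, q - 4, q - 3} := by
  subst hq
  have : NeZero (2 : F) := ⟨two_ne_zero_of_odd_card hodd⟩
  change IsGPG (conicBlocks F) _ _ _
  refine ⟨fun P Q => card_filter_mem_mem_le_one, fun B hB => ?_, fun P => ?_,
    fun P B hB hP => ?_, exists_antiflag_card_eq hq5⟩
  · obtain ⟨a, b, ha, hb, rfl⟩ := mem_conicBlocks.mp hB
    rw [card_conicBlock ha hb]
    omega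
  · rw [card_filter_mem_conicBlocks (by omega)]
    omega
  · obtain ⟨a, b, ha, hb, rfl⟩ := mem_conicBlocks.mp hB
    exact card_filter_joinedIn_mem ha hb hP
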